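/- arXiv:2304.08559 — 7 statements merged into one kernel-verified Lean document; each statement's English description precedes it below -/
import Mathlib

section
/- Let N ≥ 1 and let (D_i, I_i, R_i), i = 1,…,N, be independent and identically distributed triples of {0,1}-valued random variables on a probability space such that almost surely D_i = 1 implies R_i = 0, and set Y_i = D_i·I_i. Assume P(D_1 = 1) > 0 and P(R_1 = 0) > 0. Then E[(Σ_{i=1}^N Y_i)/(Σ_{i=1}^N D_i) | Σ_{i=1}^N D_i > 0] = P(I_1 = 1 | R_1 = 0) holds if and only if P(I_1 = 1 | D_1 = 1) = P(I_1 = 1 | R_1 = 0), i.e., if and only if D_1 and I_1 are conditionally independent given the event {R_1 = 0} (MITI). -/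
/-!
Write `S = ∑ j, D j`. As `D i ∈ {0, 1}`, `D i * I i / S = D i * I i / (1 + ∑ j ≠ i, D j)`, and
the denominator is independent of `(D i, I i)`; hence
`E[D i I i / S] = E[D i I i] E[(1 + ∑ j ≠ i, D j)⁻¹]`, and likewise for `D i / S`. Identical
distribution gives `E[D i I i] = p E[D i]` with `p = P(I₁ = 1 | D₁ = 1)`, so summing over `i`,
`E[TPR] = p E[∑ i, D i / S] = p P(S > 0)`. Thus `E[TPR | S > 0] = P(I₁ = 1 | D₁ = 1)`, and
unbiasedness for `P(I₁ = 1 | R₁ = 0)` is exactly MITI.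
-/

open MeasureTheory ProbabilityTheory Finset

lemma mul_div_add_eq_mul_mul_inv_one_add {K : Type*} [Field K] {d s : K} (x : K)
    (hd : d = 0 ∨ d = 1) : d * x / (d + s) = d * x * (1 + s)⁻¹ := by
  rcases hd with rfl | rfl <;> simp [div_eq_mul_inv]

section

variable {Ω : Type*} [MeasurableSpace Ω] {μ : Measure Ω}

lemma integral_eq_measureReal_of_eq_zero_or_one {f : Ω → ℝ} (hf : Measurable f)
    (h01 : ∀ ω, f ω = 0 ∨ f ω = 1) : ∫ ω, f ω ∂μ = μ.real {ω | f ω = 1} := by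
  rw [← integral_indicator_one (s := {ω | f ω = 1}) (hf (measurableSet_singleton 1))]
  congr 1 with ω
  rcases h01 ω with h | h <;> simp [h]

lemma integral_cond_eq_inv_mul_integral {A : Set Ω} {f : Ω → ℝ}
    (hf : ∀ ω ∉ A, f ω = 0) :
    ∫ ω, f ω ∂μ[|A] = (μ.real A)⁻¹ * ∫ ω, f ω ∂μ := by
  rw [ProbabilityTheory.cond, integral_smul_measure,
    setIntegral_eq_integral_of_forall_compl_eq_zero hf, smul_eq_mul, ENNReal.toReal_inv, measureReal_def]

lemma integrable_div_of_abs_le_abs [IsFiniteMeasure μ] {f g : Ω → ℝ} (hf : Measurable f)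
    (hg : Measurable g) (hfg : ∀ ω, |f ω| ≤ |g ω|) : Integrable (fun ω => f ω / g ω) μ :=
  .of_bound (hf.div hg).aestronglyMeasurable 1 <| ae_of_all _ fun ω => by
    rw [Real.norm_eq_abs, abs_div]
    exact div_le_one_of_le₀ (hfg ω) (abs_nonneg _)

lemma ProbabilityTheory.IndepFun.integral_mul_div_add {d x s : Ω → ℝ}
    (hd : ∀ ω, d ω = 0 ∨ d ω = 1)
    (hdx : Measurable fun ω => d ω * x ω) (hs : Measurable s)
    (hindep : IndepFun (fun ω => d ω * x ω) s μ) :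
    ∫ ω, d ω * x ω / (d ω + s ω) ∂μ = (∫ ω, d ω * x ω ∂μ) * ∫ ω, (1 + s ω)⁻¹ ∂μ := by
  simp_rw [mul_div_add_eq_mul_mul_inv_one_add _ (hd _)]
  exact (hindep.comp measurable_id (by fun_prop : Measurable fun t : ℝ => (1 + t)⁻¹))
    |>.integral_fun_mul_eq_mul_integral hdx.aestronglyMeasurable (by fun_prop)

end

lemma sum_div_sum_eq_indicator_one {Ω ι : Type*} [Fintype ι] {D : ι → Ω → ℝ}
    (hD : ∀ i ω, 0 ≤ D i ω) (ω : Ω) :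
    ∑ i, D i ω / ∑ j, D j ω = {ω | 0 < ∑ j, D j ω}.indicator 1 ω := by
  rw [← Finset.sum_div]
  by_cases hS : 0 < ∑ j, D j ω
  · simp [hS, hS.ne']
  · have : ∑ j, D j ω = 0 := le_antisymm (not_lt.1 hS) (sum_nonneg fun j _ => hD j ω)
    simp [this]

section TestPositiveRate

variable {Ω ι : Type*} [MeasurableSpace Ω] {μ : Measure Ω} [Fintype ι] {D I : ι → Ω → ℝ}

/-- Equal to `0` when nobody is tested, since `x / 0 = 0`. -/
noncomputable def testPositiveRate (D I : ι → Ω → ℝ) (ω : Ω) : ℝ :=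
  (∑ i, D i ω * I i ω) / ∑ i, D i ω

lemma ProbabilityTheory.iIndepFun.indepFun_sum_erase [DecidableEq ι]
    (hindep : iIndepFun (fun i ω => (D i ω, I i ω)) μ)
    (hD : ∀ i, Measurable (D i)) (hI : ∀ i, Measurable (I i)) (i : ι) :
    IndepFun (fun ω => (D i ω, I i ω)) (fun ω => ∑ j ∈ univ.erase i, D j ω) μ := by
  have hsum : (fun ω => ∑ j ∈ univ.erase i, D j ω)
      = Prod.fst ∘ ∑ j ∈ univ.erase i, fun ω => (D j ω, I j ω) := by
    ext ω
    simp only [Function.comp_apply, Finset.sum_apply, Prod.fst_sum]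
  rw [hsum]
  exact (hindep.indepFun_finsetSum_of_notMem (fun j => (hD j).prodMk (hI j))
    (notMem_erase i univ)).symm.comp measurable_id measurable_fst

lemma ProbabilityTheory.iIndepFun.integral_mul_div_sum [DecidableEq ι]
    (hindep : iIndepFun (fun i ω => (D i ω, I i ω)) μ)
    (hD : ∀ i, Measurable (D i)) (hI : ∀ i, Measurable (I i))
    (hD01 : ∀ i ω, D i ω = 0 ∨ D i ω = 1) {x : ℝ × ℝ → ℝ} (hx : Measurable x) (i : ι) :
    ∫ ω, D i ω * x (D i ω, I i ω) / ∑ j, D j ω ∂μ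
      = (∫ ω, D i ω * x (D i ω, I i ω) ∂μ) * ∫ ω, (1 + ∑ j ∈ univ.erase i, D j ω)⁻¹ ∂μ := by
  simp_rw [← add_sum_erase univ _ (mem_univ i)]
  refine IndepFun.integral_mul_div_add (hD01 i) (by fun_prop) ?_ ?_
  · exact Finset.measurable_sum _ fun j _ => hD j
  · exact (hindep.indepFun_sum_erase hD hI i).comp (φ := fun p => p.1 * x p) (by fun_prop)
      measurable_id

lemma integral_testPositiveRate [IsFiniteMeasure μ]
    (hindep : iIndepFun (fun i ω => (D i ω, I i ω)) μ)
    (hident : ∀ i j, IdentDistrib (fun ω => (D i ω, I i ω)) (fun ω => (D j ω, I j ω)) μ μ)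
    (hD : ∀ i, Measurable (D i)) (hI : ∀ i, Measurable (I i))
    (hD01 : ∀ i ω, D i ω = 0 ∨ D i ω = 1) (hI01 : ∀ i ω, I i ω = 0 ∨ I i ω = 1)
    {i₀ : ι} (h₀ : ∫ ω, D i₀ ω ∂μ ≠ 0) :
    ∫ ω, testPositiveRate D I ω ∂μ
      = (∫ ω, D i₀ ω * I i₀ ω ∂μ) / (∫ ω, D i₀ ω ∂μ) * μ.real {ω | 0 < ∑ i, D i ω} := by
  classical
  set p := (∫ ω, D i₀ ω * I i₀ ω ∂μ) / (∫ ω, D i₀ ω ∂μ) with hp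
  have hDnn : ∀ i ω, 0 ≤ D i ω := fun i ω => by rcases hD01 i ω with h | h <;> simp [h]
  have hS : Measurable fun ω => ∑ j, D j ω := Finset.measurable_sum _ fun j _ => hD j
  have hterm : ∀ i, ∫ ω, D i ω * I i ω / ∑ j, D j ω ∂μ = p * ∫ ω, D i ω / ∑ j, D j ω ∂μ := by
    intro i
    have hDI := hindep.integral_mul_div_sum hD hI hD01 measurable_snd i
    have hD' := hindep.integral_mul_div_sum hD hI hD01 (x := fun _ => 1) measurable_const i
    simp only [mul_one] at hDI hD'
    have hDI₀ : ∫ ω, D i ω * I i ω ∂μ = ∫ ω, D i₀ ω * I i₀ ω ∂μ :=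
      ((hident i i₀).comp (u := fun p : ℝ × ℝ => p.1 * p.2) (by fun_prop)).integral_eq
    have hD₀ : ∫ ω, D i ω ∂μ = ∫ ω, D i₀ ω ∂μ := ((hident i i₀).comp measurable_fst).integral_eq
    rw [hDI, hD', hDI₀, hD₀, ← mul_assoc, hp, div_mul_cancel₀ _ h₀]
  have hDS : ∀ i ω, |D i ω| ≤ |∑ j, D j ω| := fun i ω => by
    rw [abs_of_nonneg (hDnn i ω), abs_of_nonneg (sum_nonneg fun j _ => hDnn j ω)]
    exact single_le_sum (fun j _ => hDnn j ω) (mem_univ i)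
  have hint : ∀ i, Integrable (fun ω => D i ω * I i ω / ∑ j, D j ω) μ := by
    refine fun i => integrable_div_of_abs_le_abs ((hD i).mul (hI i)) hS fun ω => ?_
    refine le_trans ?_ (hDS i ω)
    rw [abs_mul]
    rcases hI01 i ω with h | h <;> simp [h]
  have hint' : ∀ i, Integrable (fun ω => D i ω / ∑ j, D j ω) μ :=
    fun i => integrable_div_of_abs_le_abs (hD i) hS (hDS i)
  calc ∫ ω, testPositiveRate D I ω ∂μ
      = ∑ i, ∫ ω, D i ω * I i ω / ∑ j, D j ω ∂μ := by
        simp only [testPositiveRate, Finset.sum_div]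
        exact integral_finsetSum _ fun i _ => hint i
    _ = p * ∫ ω, ∑ i, D i ω / ∑ j, D j ω ∂μ := by
        rw [integral_finsetSum _ fun i _ => hint' i, mul_sum]
        exact sum_congr rfl fun i _ => hterm i
    _ = p * μ.real {ω | 0 < ∑ i, D i ω} := by
        simp_rw [sum_div_sum_eq_indicator_one hDnn]
        rw [integral_indicator_one (measurableSet_lt measurable_const hS)]

lemma integral_testPositiveRate_cond [IsFiniteMeasure μ]
    (hindep : iIndepFun (fun i ω => (D i ω, I i ω)) μ)
    (hident : ∀ i j, IdentDistrib (fun ω => (D i ω, I i ω)) (fun ω => (D j ω, I j ω)) μ μ)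
    (hD : ∀ i, Measurable (D i)) (hI : ∀ i, Measurable (I i))
    (hD01 : ∀ i ω, D i ω = 0 ∨ D i ω = 1) (hI01 : ∀ i ω, I i ω = 0 ∨ I i ω = 1)
    {i₀ : ι} (hD₀ : 0 < μ {ω | D i₀ ω = 1}) :
    ∫ ω, testPositiveRate D I ω ∂μ[|{ω | 0 < ∑ i, D i ω}]
      = (μ[|{ω | D i₀ ω = 1}] {ω | I i₀ ω = 1}).toReal := by
  have hDnn : ∀ i ω, 0 ≤ D i ω := fun i ω => by rcases hD01 i ω with h | h <;> simp [h]
  have hED : ∫ ω, D i₀ ω ∂μ = μ.real {ω | D i₀ ω = 1} :=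
    integral_eq_measureReal_of_eq_zero_or_one (hD i₀) (hD01 i₀)
  have hEDI : ∫ ω, D i₀ ω * I i₀ ω ∂μ = μ.real ({ω | D i₀ ω = 1} ∩ {ω | I i₀ ω = 1}) := by
    have h01 : ∀ ω, D i₀ ω * I i₀ ω = 0 ∨ D i₀ ω * I i₀ ω = 1 := fun ω => by
      rcases hD01 i₀ ω with h | h <;> rcases hI01 i₀ ω with h' | h' <;> simp [h, h']
    rw [integral_eq_measureReal_of_eq_zero_or_one (f := fun ω => D i₀ ω * I i₀ ω)
      ((hD i₀).mul (hI i₀)) h01]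
    congr 1 with ω
    rcases hD01 i₀ ω with h | h <;> rcases hI01 i₀ ω with h' | h' <;> simp [h, h']
  have hD₀real : 0 < μ.real {ω | D i₀ ω = 1} := ENNReal.toReal_pos hD₀.ne' (measure_ne_top _ _)
  have hpos : μ.real {ω | 0 < ∑ i, D i ω} ≠ 0 := by
    refine (hD₀real.trans_le (measureReal_mono (fun ω (hω : D i₀ ω = 1) => ?_)
      (measure_ne_top _ _))).ne'
    exact (hω ▸ one_pos : 0 < D i₀ ω).trans_le
      (single_le_sum (fun j _ => hDnn j ω) (mem_univ i₀))
  have hvanish : ∀ ω ∉ {ω | 0 < ∑ i, D i ω}, testPositiveRate D I ω = 0 := fun ω hω => by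
    have : ∑ j, D j ω = 0 := le_antisymm (not_lt.1 hω) (sum_nonneg fun j _ => hDnn j ω)
    simp [testPositiveRate, this]
  rw [integral_cond_eq_inv_mul_integral hvanish,
    integral_testPositiveRate hindep hident hD hI hD01 hI01 (hED ▸ hD₀real.ne'),
    cond_apply (s := {ω | D i₀ ω = 1}) (hD i₀ (measurableSet_singleton 1)),
    ENNReal.toReal_mul, ENNReal.toReal_inv, ← measureReal_def, ← measureReal_def, hED, hEDI]
  field_simp

end TestPositiveRate

theorem stmt0_general
    {Ω : Type*} [MeasurableSpace Ω] (μ : Measure Ω) [IsProbabilityMeasure μ]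
    (N : ℕ) (hN : 0 < N)
    (D I R : Fin N → Ω → ℝ)
    (hDmeas : ∀ i, Measurable (D i)) (hImeas : ∀ i, Measurable (I i))
    (hD01 : ∀ i ω, D i ω = 0 ∨ D i ω = 1)
    (hI01 : ∀ i ω, I i ω = 0 ∨ I i ω = 1)
    (hindep : iIndepFun
      (fun i ω => (D i ω, I i ω, R i ω)) μ)
    (hident : ∀ i j, IdentDistrib (fun ω => (D i ω, I i ω, R i ω))
      (fun ω => (D j ω, I j ω, R j ω)) μ μ)
    (hD1 : 0 < μ {ω | D ⟨0, hN⟩ ω = 1}) :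
    (∫ ω, (∑ i, D i ω * I i ω) / (∑ i, D i ω)
        ∂(μ[|{ω | 0 < ∑ i, D i ω}]))
      = (μ[|{ω | R ⟨0, hN⟩ ω = 0}] {ω | I ⟨0, hN⟩ ω = 1}).toReal
    ↔ (μ[|{ω | D ⟨0, hN⟩ ω = 1}] {ω | I ⟨0, hN⟩ ω = 1}).toReal
      = (μ[|{ω | R ⟨0, hN⟩ ω = 0}] {ω | I ⟨0, hN⟩ ω = 1}).toReal := by
  have key := integral_testPositiveRate_cond
    (hindep.comp (fun _ x => (x.1, x.2.1)) fun _ => by fun_prop)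
    (fun i j => (hident i j).comp (u := fun x : ℝ × ℝ × ℝ => (x.1, x.2.1)) (by fun_prop))
    hDmeas hImeas hD01 hI01 hD1
  unfold testPositiveRate at key
  rw [key]

/-- Lemma 1 of the paper: under perfect tests and i.i.d. joint processes
between individuals, the test-positive rate is a marginally unbiased estimator of
prevalence in the non-removed population if and only if MITI holds, i.e., iff
`P(I₁ = 1 | D₁ = 1) = P(I₁ = 1 | R₁ = 0)`. -/
theorem stmt0
    {Ω : Type*} [MeasurableSpace Ω] (μ : Measure Ω) [IsProbabilityMeasure μ]
    (N : ℕ) (hN : 0 < N)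
    (D I R : Fin N → Ω → ℝ)
    (hDmeas : ∀ i, Measurable (D i)) (hImeas : ∀ i, Measurable (I i))
    (hRmeas : ∀ i, Measurable (R i))
    (hD01 : ∀ i ω, D i ω = 0 ∨ D i ω = 1)
    (hI01 : ∀ i ω, I i ω = 0 ∨ I i ω = 1)
    (hR01 : ∀ i ω, R i ω = 0 ∨ R i ω = 1)
    (hindep : iIndepFun
      (fun i ω => (D i ω, I i ω, R i ω)) μ)
    (hident : ∀ i j, IdentDistrib (fun ω => (D i ω, I i ω, R i ω))
      (fun ω => (D j ω, I j ω, R j ω)) μ μ)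
    (hDR : ∀ᵐ ω ∂μ, ∀ i, D i ω = 1 → R i ω = 0)
    (hD1 : 0 < μ {ω | D ⟨0, hN⟩ ω = 1})
    (hR0 : 0 < μ {ω | R ⟨0, hN⟩ ω = 0}) :
    (∫ ω, (∑ i, D i ω * I i ω) / (∑ i, D i ω)
        ∂(μ[|{ω | 0 < ∑ i, D i ω}]))
      = (μ[|{ω | R ⟨0, hN⟩ ω = 0}] {ω | I ⟨0, hN⟩ ω = 1}).toReal
    ↔ (μ[|{ω | D ⟨0, hN⟩ ω = 1}] {ω | I ⟨0, hN⟩ ω = 1}).toReal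
      = (μ[|{ω | R ⟨0, hN⟩ ω = 0}] {ω | I ⟨0, hN⟩ ω = 1}).toReal :=
  stmt0_general μ N hN D I R hDmeas hImeas hD01 hI01 hindep hident hD1
end

section
/- Let n ≥ 1, let x_1,…,x_n ∈ {0,1} be fixed, and let D_1,…,D_n be independent and identically distributed Bernoulli(q) random variables with q ∈ (0,1]. Then E[(Σ_{i=1}^n D_i·x_i)/(Σ_{i=1}^n D_i) | Σ_{i=1}^n D_i > 0] = (Σ_{i=1}^n x_i)/n. -/
/-!
Since the infection statuses are fixed, the test-positive rate is `∑ i, xᵢ Rᵢ` with the shares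
`Rᵢ = Dᵢ / ∑ⱼ Dⱼ`. The testing indicators are i.i.d., so their joint law is invariant under
permutations of the individuals, and all shares have the same conditional expectation given
`∑ⱼ Dⱼ > 0`. On that event the shares sum to `1`, so each has conditional expectation `1/n`,
and linearity gives `(∑ i, xᵢ) / n`.
-/

open MeasureTheory ProbabilityTheory

namespace ProbabilityTheory

variable {Ω Ω' : Type*} [MeasurableSpace Ω] [MeasurableSpace Ω'] {μ : Measure Ω}

open Classical in
lemma measure_preimage_of_forall_eq_zero_or_eq_one [IsProbabilityMeasure μ] {X : Ω → ℝ}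
    (hX : Measurable X) (hX01 : ∀ ω, X ω = 0 ∨ X ω = 1) (s : Set ℝ) :
    μ (X ⁻¹' s) = (if (1 : ℝ) ∈ s then μ {ω | X ω = 1} else 0)
      + (if (0 : ℝ) ∈ s then 1 - μ {ω | X ω = 1} else 0) := by
  have hone : MeasurableSet {ω | X ω = 1} := hX (measurableSet_singleton 1)
  split_ifs with h1 h0 h0
  · have : X ⁻¹' s = Set.univ := by
      ext ω; rcases hX01 ω with h | h <;> simp [h, h0, h1]
    rw [this, measure_univ, add_tsub_cancel_of_le prob_le_one]
  · have : X ⁻¹' s = {ω | X ω = 1} := by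
      ext ω; rcases hX01 ω with h | h <;> simp [h, h0, h1]
    rw [this, add_zero]
  · have : X ⁻¹' s = {ω | X ω = 1}ᶜ := by
      ext ω; rcases hX01 ω with h | h <;> simp [h, h0, h1]
    rw [this, prob_compl_eq_one_sub hone, zero_add]
  · have : X ⁻¹' s = ∅ := by
      ext ω; rcases hX01 ω with h | h <;> simp [h, h0, h1]
    rw [this, measure_empty, add_zero]

lemma map_eq_map_of_forall_eq_zero_or_eq_one {ν : Measure Ω'} [IsProbabilityMeasure μ]
    [IsProbabilityMeasure ν] {X : Ω → ℝ} {Y : Ω' → ℝ} (hX : Measurable X) (hY : Measurable Y)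
    (hX01 : ∀ ω, X ω = 0 ∨ X ω = 1) (hY01 : ∀ ω, Y ω = 0 ∨ Y ω = 1)
    (h : μ {ω | X ω = 1} = ν {ω | Y ω = 1}) :
    μ.map X = ν.map Y := by
  ext s hs
  rw [Measure.map_apply hX hs, Measure.map_apply hY hs,
    measure_preimage_of_forall_eq_zero_or_eq_one hX hX01,
    measure_preimage_of_forall_eq_zero_or_eq_one hY hY01, h]

variable {ι β : Type*} [MeasurableSpace β]

def Exchangeable (X : ι → Ω → β) (μ : Measure Ω) : Prop :=
  ∀ σ : Equiv.Perm ι, μ.map (fun ω i ↦ X (σ i) ω) = μ.map (fun ω i ↦ X i ω)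

lemma iIndepFun.exchangeable [Fintype ι] {X : ι → Ω → β} (hX : ∀ i, Measurable (X i))
    (hindep : iIndepFun X μ) (hident : ∀ i j, μ.map (X i) = μ.map (X j)) :
    Exchangeable X μ := by
  intro σ
  rw [(hindep.precomp σ.injective).map_fun_eq_pi_map fun i ↦ (hX (σ i)).aemeasurable,
    hindep.map_fun_eq_pi_map fun i ↦ (hX i).aemeasurable]
  congr 1
  funext i
  exact hident (σ i) i

lemma Exchangeable.integral_comp_perm {X : ι → Ω → β} (hexch : Exchangeable X μ)
    (hX : ∀ i, Measurable (X i)) {g : (ι → β) → ℝ} (hg : Measurable g) (σ : Equiv.Perm ι) :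
    ∫ ω, g (fun i ↦ X (σ i) ω) ∂μ = ∫ ω, g (fun i ↦ X i ω) ∂μ := by
  rw [← integral_map (measurable_pi_lambda _ fun i ↦ hX (σ i)).aemeasurable
    hg.aestronglyMeasurable, hexch σ,
    integral_map (measurable_pi_lambda _ hX).aemeasurable hg.aestronglyMeasurable]

section Shares

variable [Fintype ι] {X : ι → Ω → ℝ}

lemma integrable_div_sum [IsFiniteMeasure μ] (hX : ∀ i, Measurable (X i))
    (hX0 : ∀ i ω, 0 ≤ X i ω) (i : ι) :
    Integrable (fun ω ↦ X i ω / ∑ j, X j ω) μ := by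
  refine .of_bound ((hX i).div (Finset.measurable_sum _ fun j _ ↦ hX j)).aestronglyMeasurable 1
    (.of_forall fun ω ↦ ?_)
  have hle : X i ω ≤ ∑ j, X j ω :=
    Finset.single_le_sum (fun j _ ↦ hX0 j ω) (Finset.mem_univ i)
  rw [Real.norm_of_nonneg (div_nonneg (hX0 i ω) ((hX0 i ω).trans hle))]
  exact div_le_one_of_le₀ hle ((hX0 i ω).trans hle)

lemma Exchangeable.integral_div_sum_cond [IsFiniteMeasure μ] (hexch : Exchangeable X μ)
    (hX : ∀ i, Measurable (X i)) (hX0 : ∀ i ω, 0 ≤ X i ω)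
    (hpos : μ {ω | 0 < ∑ j, X j ω} ≠ 0) (i : ι) :
    ∫ ω, X i ω / ∑ j, X j ω ∂μ[|{ω | 0 < ∑ j, X j ω}] = (Fintype.card ι : ℝ)⁻¹ := by
  set E := {ω | 0 < ∑ j, X j ω}
  have hE : MeasurableSet E :=
    measurableSet_lt measurable_const (Finset.measurable_sum _ fun j _ ↦ hX j)
  have : IsProbabilityMeasure μ[|E] := cond_isProbabilityMeasure hpos
  have hcond : ∀ j, ∫ ω, X j ω / ∑ k, X k ω ∂μ[|E]
      = (μ E)⁻¹.toReal * ∫ ω, X j ω / ∑ k, X k ω ∂μ := fun j ↦ by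
    rw [cond, integral_smul_measure, smul_eq_mul, setIntegral_eq_integral_of_forall_compl_eq_zero]
    intro ω hω
    rw [show ∑ k, X k ω = 0 from le_antisymm (not_lt.1 hω) (Finset.sum_nonneg fun k _ ↦ hX0 k ω),
      div_zero]
  have hsymm : ∀ j, ∫ ω, X j ω / ∑ k, X k ω ∂μ[|E] = ∫ ω, X i ω / ∑ k, X k ω ∂μ[|E] := by
    classical
    intro j
    rw [hcond, hcond]
    congr 1
    have := hexch.integral_comp_perm hX (g := fun d ↦ d j / ∑ k, d k) (by fun_prop)
      (Equiv.swap i j)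
    have hperm : ∀ ω, ∑ k, X (Equiv.swap i j k) ω = ∑ k, X k ω := fun ω ↦
      Equiv.sum_comp (Equiv.swap i j) (fun k ↦ X k ω)
    simpa only [Equiv.swap_apply_right, hperm] using this.symm
  have hshares : ∀ᵐ ω ∂μ[|E], ∑ j, X j ω / ∑ k, X k ω = 1 :=
    (ae_cond_mem hE).mono fun ω hω ↦ by rw [← Finset.sum_div, div_self (ne_of_gt hω)]
  have hsum : ∑ j, ∫ ω, X j ω / ∑ k, X k ω ∂μ[|E] = 1 := by
    rw [← integral_finsetSum _ fun j _ ↦ integrable_div_sum hX hX0 j, integral_congr_ae hshares,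
      integral_const, probReal_univ, smul_eq_mul, mul_one]
  rw [Finset.sum_congr rfl fun j _ ↦ hsymm j, Finset.sum_const, Finset.card_univ,
    nsmul_eq_mul] at hsum
  exact eq_inv_of_mul_eq_one_right hsum

lemma Exchangeable.integral_sum_mul_div_sum_cond [IsFiniteMeasure μ] (hexch : Exchangeable X μ)
    (hX : ∀ i, Measurable (X i)) (hX0 : ∀ i ω, 0 ≤ X i ω)
    (hpos : μ {ω | 0 < ∑ j, X j ω} ≠ 0) (a : ι → ℝ) :
    ∫ ω, (∑ i, X i ω * a i) / ∑ j, X j ω ∂μ[|{ω | 0 < ∑ j, X j ω}]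
      = (∑ i, a i) / Fintype.card ι := by
  simp_rw [Finset.sum_div, mul_div_right_comm]
  rw [integral_finsetSum _ fun i _ ↦ (integrable_div_sum hX hX0 i).mul_const _]
  simp_rw [integral_mul_const, hexch.integral_div_sum_cond hX hX0 hpos, div_eq_inv_mul]

end Shares

end ProbabilityTheory

theorem stmt2_general
    {Ω : Type*} [MeasurableSpace Ω] (μ : Measure Ω) [IsProbabilityMeasure μ]
    (n : ℕ) (hn : 0 < n)
    (x : Fin n → ℝ)
    (q : ℝ) (hq : q ∈ Set.Ioc (0 : ℝ) 1)
    (D : Fin n → Ω → ℝ)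
    (hDmeas : ∀ i, Measurable (D i))
    (hD01 : ∀ i ω, D i ω = 0 ∨ D i ω = 1)
    (hindep : iIndepFun D μ)
    (hq1 : ∀ i, μ {ω | D i ω = 1} = ENNReal.ofReal q) :
    (∫ ω, (∑ i, D i ω * x i) / (∑ i, D i ω)
        ∂(μ[|{ω | 0 < ∑ i, D i ω}]))
      = (∑ i, x i) / n := by
  have hD0 : ∀ i ω, 0 ≤ D i ω := fun i ω ↦ by rcases hD01 i ω with h | h <;> simp [h]
  have hexch : Exchangeable D μ := hindep.exchangeable hDmeas fun i j ↦
    map_eq_map_of_forall_eq_zero_or_eq_one (hDmeas i) (hDmeas j) (hD01 i) (hD01 j)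
      ((hq1 i).trans (hq1 j).symm)
  have hfirst_tested : {ω | D ⟨0, hn⟩ ω = 1} ⊆ {ω | 0 < ∑ i, D i ω} := fun ω (hω : D _ ω = 1) ↦
    zero_lt_one.trans_le <| hω ▸ Finset.single_le_sum (fun i _ ↦ hD0 i ω) (Finset.mem_univ _)
  have hpos : μ {ω | 0 < ∑ i, D i ω} ≠ 0 :=
    ((ENNReal.ofReal_pos.2 hq.1).trans_le ((hq1 _).symm.trans_le (measure_mono hfirst_tested))).ne'
  rw [hexch.integral_sum_mul_div_sum_cond hDmeas hD0 hpos, Fintype.card_fin]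

/-- conditional unbiasedness of the test-positive rate under simple random
testing: with fixed infection statuses `x i ∈ {0,1}` and i.i.d. Bernoulli(q) testing
indicators, `E[(Σ Dᵢxᵢ)/(Σ Dᵢ) | Σ Dᵢ > 0] = (Σ xᵢ)/n`. -/
theorem stmt2
    {Ω : Type*} [MeasurableSpace Ω] (μ : Measure Ω) [IsProbabilityMeasure μ]
    (n : ℕ) (hn : 0 < n)
    (x : Fin n → ℝ) (hx : ∀ i, x i = 0 ∨ x i = 1)
    (q : ℝ) (hq : q ∈ Set.Ioc (0 : ℝ) 1)
    (D : Fin n → Ω → ℝ)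
    (hDmeas : ∀ i, Measurable (D i))
    (hD01 : ∀ i ω, D i ω = 0 ∨ D i ω = 1)
    (hindep : iIndepFun D μ)
    (hq1 : ∀ i, μ {ω | D i ω = 1} = ENNReal.ofReal q) :
    (∫ ω, (∑ i, D i ω * x i) / (∑ i, D i ω)
        ∂(μ[|{ω | 0 < ∑ i, D i ω}]))
      = (∑ i, x i) / n :=
  stmt2_general μ n hn x q hq D hDmeas hD01 hindep hq1
end

section
/- Let n ≥ 1, fix w_1,…,w_n ∈ {0,1}, and let η, ν ∈ (0,1] with η + ν > 1. On a probability space, let D_1,…,D_n be {0,1}-valued random variables with p_i := P(D_i = 1) > 0 for every i, and for each i let F_i and G_i be {0,1}-valued random variables with P(F_i = 1) = η and P(G_i = 1) = ν, such that the pair (F_i, G_i) is independent of the random vector (D_1,…,D_n). Define Y_i = D_i·(F_i·(1 − w_i) + (1 − G_i)·w_i) and ω_i = 1/p_i. Then E[(η + ν − 1)^{-1} · Σ_{i=1}^n ω_i·D_i·(1 − Y_i) − (1 − η)·(η + ν − 1)^{-1} · Σ_{i=1}^n ω_i·D_i] = Σ_{i=1}^n w_i. -/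
/-!
Conditionally on being tested, individual `i` returns a negative result with probability
`1 - η` if infectious and `ν` if well, by independence of `(Fᵢ, Gᵢ)` from the testing
indicators. Weighting by `ωᵢ = 1 / pᵢ` turns `E[ωᵢ Dᵢ (1 - Yᵢ)]` into this probability
`1 - η + (η + ν - 1) wᵢ` and `E[ωᵢ Dᵢ]` into `1`, so the estimator recovers each `wᵢ`
exactly.
-/

open MeasureTheory ProbabilityTheory

lemma eq_indicator_one_of_forall_eq_zero_or_one {Ω : Type*} {X : Ω → ℝ}
    (h01 : ∀ ω, X ω = 0 ∨ X ω = 1) : X = {ω | X ω = 1}.indicator 1 := by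
  funext ω
  rcases h01 ω with h | h <;> simp [h]

section ZeroOne

variable {Ω : Type*} [MeasurableSpace Ω] {μ : Measure Ω} {X : Ω → ℝ}

lemma integral_eq_measureReal_of_forall_eq_zero_or_one (hX : Measurable X)
    (h01 : ∀ ω, X ω = 0 ∨ X ω = 1) : ∫ ω, X ω ∂μ = μ.real {ω | X ω = 1} := by
  conv_lhs => rw [eq_indicator_one_of_forall_eq_zero_or_one h01]
  exact integral_indicator_one (hX (measurableSet_singleton 1))

lemma integrable_of_forall_eq_zero_or_one [IsFiniteMeasure μ] (hX : Measurable X)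
    (h01 : ∀ ω, X ω = 0 ∨ X ω = 1) : Integrable X μ := by
  rw [eq_indicator_one_of_forall_eq_zero_or_one h01]
  exact (integrable_const 1).indicator (hX (measurableSet_singleton 1))

end ZeroOne

/-- The result individual `i` would get if tested: `Yᵢ = Dᵢ * testOutcome wᵢ (Fᵢ, Gᵢ)`. -/
def testOutcome (w : ℝ) (fg : ℝ × ℝ) : ℝ :=
  fg.1 * (1 - w) + (1 - fg.2) * w

lemma measurable_testOutcome (w : ℝ) : Measurable (testOutcome w) := by
  unfold testOutcome
  fun_prop

lemma indepFun_one_sub_testOutcome {Ω : Type*} [MeasurableSpace Ω] {μ : Measure Ω}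
    {D F G : Ω → ℝ} (w : ℝ) (hindep : IndepFun (fun ω => (F ω, G ω)) D μ) :
    IndepFun D (fun ω => 1 - testOutcome w (F ω, G ω)) μ :=
  (hindep.comp (measurable_const.sub (measurable_testOutcome w)) measurable_id).symm

section TestOutcome

variable {Ω : Type*} [MeasurableSpace Ω] {μ : Measure Ω} [IsProbabilityMeasure μ]
  {D F G : Ω → ℝ} (w : ℝ)

lemma integrable_testOutcome (hF : Measurable F) (hG : Measurable G)
    (hF01 : ∀ ω, F ω = 0 ∨ F ω = 1) (hG01 : ∀ ω, G ω = 0 ∨ G ω = 1) :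
    Integrable (fun ω => testOutcome w (F ω, G ω)) μ :=
  ((integrable_of_forall_eq_zero_or_one hF hF01).mul_const _).add
    (((integrable_const 1).sub (integrable_of_forall_eq_zero_or_one hG hG01)).mul_const _)

lemma integral_testOutcome (hF : Measurable F) (hG : Measurable G)
    (hF01 : ∀ ω, F ω = 0 ∨ F ω = 1) (hG01 : ∀ ω, G ω = 0 ∨ G ω = 1) :
    ∫ ω, testOutcome w (F ω, G ω) ∂μ
      = testOutcome w (μ.real {ω | F ω = 1}, μ.real {ω | G ω = 1}) := by
  have hFi := integrable_of_forall_eq_zero_or_one (μ := μ) hF hF01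
  have hGi := integrable_of_forall_eq_zero_or_one (μ := μ) hG hG01
  have hGi' : Integrable (fun ω => 1 - G ω) μ := (integrable_const 1).sub hGi
  simp only [testOutcome]
  rw [integral_add (hFi.mul_const _) (hGi'.mul_const _),
    integral_mul_const, integral_mul_const, integral_sub (integrable_const 1) hGi,
    integral_eq_measureReal_of_forall_eq_zero_or_one hF hF01,
    integral_eq_measureReal_of_forall_eq_zero_or_one hG hG01, integral_const, probReal_univ,
    one_smul]

lemma integrable_mul_one_sub_testOutcome (hD : Measurable D) (hF : Measurable F)
    (hG : Measurable G) (hD01 : ∀ ω, D ω = 0 ∨ D ω = 1) (hF01 : ∀ ω, F ω = 0 ∨ F ω = 1)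
    (hG01 : ∀ ω, G ω = 0 ∨ G ω = 1) (hindep : IndepFun (fun ω => (F ω, G ω)) D μ) :
    Integrable (fun ω => D ω * (1 - testOutcome w (F ω, G ω))) μ :=
  (indepFun_one_sub_testOutcome w hindep).integrable_mul
    (integrable_of_forall_eq_zero_or_one hD hD01)
    ((integrable_const 1).sub (integrable_testOutcome w hF hG hF01 hG01))

lemma integral_mul_one_sub_testOutcome (hD : Measurable D) (hF : Measurable F)
    (hG : Measurable G) (hD01 : ∀ ω, D ω = 0 ∨ D ω = 1) (hF01 : ∀ ω, F ω = 0 ∨ F ω = 1)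
    (hG01 : ∀ ω, G ω = 0 ∨ G ω = 1) (hindep : IndepFun (fun ω => (F ω, G ω)) D μ) :
    ∫ ω, D ω * (1 - testOutcome w (F ω, G ω)) ∂μ
      = μ.real {ω | D ω = 1}
        * (1 - testOutcome w (μ.real {ω | F ω = 1}, μ.real {ω | G ω = 1})) := by
  have hZ : Measurable fun ω => 1 - testOutcome w (F ω, G ω) :=
    measurable_const.sub ((measurable_testOutcome w).comp (hF.prodMk hG))
  rw [(indepFun_one_sub_testOutcome w hindep).integral_fun_mul_eq_mul_integral
      hD.aestronglyMeasurable hZ.aestronglyMeasurable,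
    integral_eq_measureReal_of_forall_eq_zero_or_one hD hD01,
    integral_sub (integrable_const 1) (integrable_testOutcome w hF hG hF01 hG01),
    integral_testOutcome w hF hG hF01 hG01, integral_const, probReal_univ, one_smul]

end TestOutcome

theorem stmt3_general
    {Ω : Type*} [MeasurableSpace Ω] (μ : Measure Ω) [IsProbabilityMeasure μ]
    (n : ℕ)
    (w : Fin n → ℝ)
    (η ν : ℝ)
    (hην : 1 < η + ν)
    (D F G : Fin n → Ω → ℝ)
    (hDmeas : ∀ i, Measurable (D i)) (hFmeas : ∀ i, Measurable (F i))
    (hGmeas : ∀ i, Measurable (G i))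
    (hD01 : ∀ i ω, D i ω = 0 ∨ D i ω = 1)
    (hF01 : ∀ i ω, F i ω = 0 ∨ F i ω = 1)
    (hG01 : ∀ i ω, G i ω = 0 ∨ G i ω = 1)
    (p : Fin n → ℝ) (hp : ∀ i, p i = (μ {ω | D i ω = 1}).toReal)
    (hppos : ∀ i, 0 < p i)
    (hF1 : ∀ i, (μ {ω | F i ω = 1}).toReal = η)
    (hG1 : ∀ i, (μ {ω | G i ω = 1}).toReal = ν)
    (hindep : ∀ i, IndepFun (fun ω => (F i ω, G i ω)) (fun ω j => D j ω) μ)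
    (Y : Fin n → Ω → ℝ)
    (hY : ∀ i ω, Y i ω = D i ω * (F i ω * (1 - w i) + (1 - G i ω) * w i)) :
    ∫ ω, ((η + ν - 1)⁻¹ * ∑ i, (p i)⁻¹ * D i ω * (1 - Y i ω)
        - (1 - η) * (η + ν - 1)⁻¹ * ∑ i, (p i)⁻¹ * D i ω) ∂μ
      = ∑ i, w i := by
  have hindepD i : IndepFun (fun ω => (F i ω, G i ω)) (D i) μ :=
    (hindep i).comp measurable_id (measurable_pi_apply i)
  have hDY i : (fun ω => (p i)⁻¹ * D i ω * (1 - Y i ω))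
      = fun ω => (p i)⁻¹ * (D i ω * (1 - testOutcome (w i) (F i ω, G i ω))) := by
    funext ω
    rcases hD01 i ω with h | h <;> simp [hY, testOutcome, h]
  have hDYint i : Integrable (fun ω => (p i)⁻¹ * D i ω * (1 - Y i ω)) μ := by
    rw [hDY i]
    exact (integrable_mul_one_sub_testOutcome (w i) (hDmeas i) (hFmeas i) (hGmeas i) (hD01 i)
      (hF01 i) (hG01 i) (hindepD i)).const_mul _
  have hDint i : Integrable (fun ω => (p i)⁻¹ * D i ω) μ :=
    (integrable_of_forall_eq_zero_or_one (hDmeas i) (hD01 i)).const_mul _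
  have hDYE i : ∫ ω, (p i)⁻¹ * D i ω * (1 - Y i ω) ∂μ = 1 - testOutcome (w i) (η, ν) := by
    rw [hDY i, integral_const_mul, integral_mul_one_sub_testOutcome (w i) (hDmeas i) (hFmeas i)
      (hGmeas i) (hD01 i) (hF01 i) (hG01 i) (hindepD i), measureReal_def, measureReal_def,
      measureReal_def, ← hp, hF1, hG1, inv_mul_cancel_left₀ (hppos i).ne']
  have hDE i : ∫ ω, (p i)⁻¹ * D i ω ∂μ = 1 := by
    rw [integral_const_mul, integral_eq_measureReal_of_forall_eq_zero_or_one (hDmeas i) (hD01 i),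
      measureReal_def, ← hp, inv_mul_cancel₀ (hppos i).ne']
  rw [integral_sub ((integrable_finsetSum _ fun i _ => hDYint i).const_mul _)
      ((integrable_finsetSum _ fun i _ => hDint i).const_mul _),
    integral_const_mul, integral_const_mul, integral_finsetSum _ fun i _ => hDYint i,
    integral_finsetSum _ fun i _ => hDint i, Finset.mul_sum, Finset.mul_sum,
    ← Finset.sum_sub_distrib]
  refine Finset.sum_congr rfl fun i _ => ?_
  have hc : η + ν - 1 ≠ 0 := by linarith
  rw [hDYE, hDE, testOutcome]
  field_simp
  ring

/-- Theorem 1 of the paper, with fixed well-statuses: the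
inverse-probability-of-testing-weighted Horvitz–Thompson-type estimator is unbiased for
the number of well individuals `Σ wᵢ`. -/
theorem stmt3
    {Ω : Type*} [MeasurableSpace Ω] (μ : Measure Ω) [IsProbabilityMeasure μ]
    (n : ℕ) (hn : 0 < n)
    (w : Fin n → ℝ) (hw : ∀ i, w i = 0 ∨ w i = 1)
    (η ν : ℝ) (hη : η ∈ Set.Ioc (0 : ℝ) 1) (hν : ν ∈ Set.Ioc (0 : ℝ) 1)
    (hην : 1 < η + ν)
    (D F G : Fin n → Ω → ℝ)
    (hDmeas : ∀ i, Measurable (D i)) (hFmeas : ∀ i, Measurable (F i))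
    (hGmeas : ∀ i, Measurable (G i))
    (hD01 : ∀ i ω, D i ω = 0 ∨ D i ω = 1)
    (hF01 : ∀ i ω, F i ω = 0 ∨ F i ω = 1)
    (hG01 : ∀ i ω, G i ω = 0 ∨ G i ω = 1)
    (p : Fin n → ℝ) (hp : ∀ i, p i = (μ {ω | D i ω = 1}).toReal)
    (hppos : ∀ i, 0 < p i)
    (hF1 : ∀ i, (μ {ω | F i ω = 1}).toReal = η)
    (hG1 : ∀ i, (μ {ω | G i ω = 1}).toReal = ν)
    (hindep : ∀ i, IndepFun (fun ω => (F i ω, G i ω)) (fun ω j => D j ω) μ)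
    (Y : Fin n → Ω → ℝ)
    (hY : ∀ i ω, Y i ω = D i ω * (F i ω * (1 - w i) + (1 - G i ω) * w i)) :
    ∫ ω, ((η + ν - 1)⁻¹ * ∑ i, (p i)⁻¹ * D i ω * (1 - Y i ω)
        - (1 - η) * (η + ν - 1)⁻¹ * ∑ i, (p i)⁻¹ * D i ω) ∂μ
      = ∑ i, w i :=
  stmt3_general μ n w η ν hην D F G hDmeas hFmeas hGmeas hD01 hF01 hG01 p hp hppos hF1 hG1 hindep Y
    hY
end

section
/- Let n ≥ 1 and η, ν ∈ (0,1] with η + ν > 1. On a probability space with a sub-σ-algebra 𝒢, let W_1,…,W_n be 𝒢-measurable {0,1}-valued random variables, let D_1,…,D_n be {0,1}-valued random variables such that π_i := P(D_i = 1 | 𝒢) satisfies π_i > 0 almost surely, and let F_i, G_i be {0,1}-valued random variables satisfying E[D_i·F_i | 𝒢] = η·π_i and E[D_i·G_i | 𝒢] = ν·π_i almost surely. Define Y_i = D_i·(F_i·(1 − W_i) + (1 − G_i)·W_i) and ω_i = 1/π_i. Then almost surely E[(η + ν − 1)^{-1} · Σ_{i=1}^n ω_i·D_i·(1 − Y_i)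 − (1 − η)·(η + ν − 1)^{-1} · Σ_{i=1}^n ω_i·D_i | 𝒢] = Σ_{i=1}^n W_i. -/
open MeasureTheory ProbabilityTheory

private lemma int_of_01 {Ω : Type*} {mΩ : MeasurableSpace Ω} {μ : Measure Ω}
    [IsProbabilityMeasure μ] {f : Ω → ℝ} (hf : Measurable f)
    (h01 : ∀ ω, f ω = 0 ∨ f ω = 1) : Integrable f μ := by
  refine (integrable_const (1 : ℝ)).mono hf.aestronglyMeasurable ?_
  filter_upwards with ω
  rcases h01 ω with h | h <;> simp [h]

private lemma aux_integrable {Ω : Type*} {mΩ : MeasurableSpace Ω} (μ : Measure Ω)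
    [IsProbabilityMeasure μ] (m : MeasurableSpace Ω) (hm : m ≤ mΩ)
    (D : Ω → ℝ) (hD : Measurable[mΩ] D) (hD01 : ∀ ω, D ω = 0 ∨ D ω = 1) :
    Integrable (fun ω => ((μ[D|m]) ω)⁻¹ * D ω) μ := by
  have hDnn : ∀ ω, 0 ≤ D ω := fun ω => by rcases hD01 ω with h | h <;> simp [h]
  have hDle : ∀ ω, D ω ≤ 1 := fun ω => by rcases hD01 ω with h | h <;> simp [h]
  have hDint : Integrable D μ := int_of_01 hD hD01
  set p := μ[D|m] with hp
  have hpsm : StronglyMeasurable[m] p := stronglyMeasurable_condExp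
  have hpmeas : Measurable[mΩ] p := (hpsm.mono hm).measurable
  have hpnn : 0 ≤ᵐ[μ] p := condExp_nonneg (Filter.Eventually.of_forall hDnn)
  have hfk_meas : ∀ k : ℕ, Measurable[mΩ] fun ω => min (p ω)⁻¹ (k : ℝ) * D ω :=
    fun k => (hpmeas.inv.min measurable_const).mul hD
  have hfk_int : ∀ k : ℕ, Integrable (fun ω => min (p ω)⁻¹ (k : ℝ) * D ω) μ := by
    intro k
    refine (integrable_const (k : ℝ)).mono (hfk_meas k).aestronglyMeasurable ?_
    filter_upwards [hpnn] with ω hω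
    have h0 : (0 : ℝ) ≤ min (p ω)⁻¹ (k : ℝ) := le_min (inv_nonneg.2 hω) (Nat.cast_nonneg k)
    rw [Real.norm_eq_abs, Real.norm_eq_abs, abs_mul, abs_of_nonneg h0,
      abs_of_nonneg (hDnn ω), abs_of_nonneg (Nat.cast_nonneg k)]
    calc min (p ω)⁻¹ (k : ℝ) * D ω ≤ (k : ℝ) * 1 :=
          mul_le_mul (min_le_right _ _) (hDle ω) (hDnn ω) (Nat.cast_nonneg k)
      _ = (k : ℝ) := mul_one _
  have hfk_ce : ∀ k : ℕ, μ[fun ω => min (p ω)⁻¹ (k : ℝ) * D ω|m]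
      =ᵐ[μ] fun ω => min (p ω)⁻¹ (k : ℝ) * p ω := by
    intro k
    have hsm : StronglyMeasurable[m] fun ω => min (p ω)⁻¹ (k : ℝ) :=
      (hpsm.measurable.inv.min measurable_const).stronglyMeasurable
    exact condExp_mul_of_stronglyMeasurable_left hsm (hfk_int k) hDint
  have hfk_bound : ∀ k : ℕ, ∫ ω, min (p ω)⁻¹ (k : ℝ) * D ω ∂μ ≤ 1 := by
    intro k
    rw [← integral_condExp hm]
    calc ∫ ω, (μ[fun ω => min (p ω)⁻¹ (k : ℝ) * D ω|m]) ω ∂μ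
        = ∫ ω, min (p ω)⁻¹ (k : ℝ) * p ω ∂μ := integral_congr_ae (hfk_ce k)
      _ ≤ ∫ _, (1 : ℝ) ∂μ := by
          refine integral_mono_ae ?_ (integrable_const 1) ?_
          · refine ((integrable_condExp (m := m) (μ := μ) (f := D)).const_mul (k : ℝ)).mono
              ((hpmeas.inv.min measurable_const).mul hpmeas).aestronglyMeasurable ?_
            filter_upwards [hpnn] with ω hω
            have h0 : (0 : ℝ) ≤ min (p ω)⁻¹ (k : ℝ) :=
              le_min (inv_nonneg.2 hω) (Nat.cast_nonneg k)
            rw [Real.norm_eq_abs, Real.norm_eq_abs, abs_mul, abs_mul,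
              abs_of_nonneg h0]
            exact mul_le_mul_of_nonneg_right
              ((min_le_right _ _).trans (le_abs_self _)) (abs_nonneg _)
          · filter_upwards [hpnn] with ω hω
            simp only [Pi.zero_apply] at hω
            rcases eq_or_lt_of_le hω with h | h
            · simp [← h]
            · calc min (p ω)⁻¹ (k : ℝ) * p ω ≤ (p ω)⁻¹ * p ω :=
                    mul_le_mul_of_nonneg_right (min_le_left _ _) hω
                _ = 1 := inv_mul_cancel₀ h.ne'
      _ = 1 := by simp
  have hlin : ∀ k : ℕ, ∫⁻ ω, ENNReal.ofReal (min (p ω)⁻¹ (k : ℝ) * D ω) ∂μ ≤ 1 := by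
    intro k
    rw [← ofReal_integral_eq_lintegral_ofReal (hfk_int k)
      (by filter_upwards [hpnn] with ω hω
          exact mul_nonneg (le_min (inv_nonneg.2 hω) (Nat.cast_nonneg k)) (hDnn ω))]
    exact ENNReal.ofReal_le_one.2 (hfk_bound k)
  have hsup : ∀ ω, (⨆ k : ℕ, ENNReal.ofReal (min (p ω)⁻¹ (k : ℝ) * D ω))
      = ENNReal.ofReal ((p ω)⁻¹ * D ω) := by
    intro ω
    apply le_antisymm
    · exact iSup_le fun k => ENNReal.ofReal_le_ofReal
        (mul_le_mul_of_nonneg_right (min_le_left _ _) (hDnn ω))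
    · obtain ⟨k, hk⟩ := exists_nat_ge (p ω)⁻¹
      exact le_iSup_of_le k (le_of_eq (by rw [min_eq_left hk]))
  have hmct : ∫⁻ ω, ENNReal.ofReal ((p ω)⁻¹ * D ω) ∂μ ≤ 1 := by
    calc ∫⁻ ω, ENNReal.ofReal ((p ω)⁻¹ * D ω) ∂μ
        = ∫⁻ ω, ⨆ k : ℕ, ENNReal.ofReal (min (p ω)⁻¹ (k : ℝ) * D ω) ∂μ :=
          lintegral_congr fun ω => (hsup ω).symm
      _ = ⨆ k : ℕ, ∫⁻ ω, ENNReal.ofReal (min (p ω)⁻¹ (k : ℝ) * D ω) ∂μ := by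
          refine lintegral_iSup (fun k => (hfk_meas k).ennreal_ofReal) ?_
          intro j k hjk ω
          exact ENNReal.ofReal_le_ofReal (mul_le_mul_of_nonneg_right
            (min_le_min le_rfl (by exact_mod_cast hjk)) (hDnn ω))
      _ ≤ 1 := iSup_le hlin
  have hnn : 0 ≤ᵐ[μ] fun ω => (p ω)⁻¹ * D ω := by
    filter_upwards [hpnn] with ω hω
    exact mul_nonneg (inv_nonneg.2 hω) (hDnn ω)
  refine ⟨(hpmeas.inv.mul hD).aestronglyMeasurable, ?_⟩
  exact (hasFiniteIntegral_iff_ofReal hnn).2 (lt_of_le_of_lt hmct ENNReal.one_lt_top)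

/-- Theorem 1 of the paper, conditional-expectation form: the
inverse-probability-weighted Horvitz–Thompson-type estimator is conditionally unbiased,
given the σ-algebra `m` generated by well-statuses and clearance times, for the number of
well individuals `Σ Wᵢ`. -/
theorem stmt4
    {Ω : Type*} (m : MeasurableSpace Ω) {mΩ : MeasurableSpace Ω} (μ : Measure Ω) [IsProbabilityMeasure μ]
    (hm : m ≤ mΩ)
    (n : ℕ) (hn : 0 < n)
    (η ν : ℝ) (hη : η ∈ Set.Ioc (0 : ℝ) 1) (hν : ν ∈ Set.Ioc (0 : ℝ) 1)
    (hην : 1 < η + ν)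
    (W D F G : Fin n → Ω → ℝ)
    (hWmeas : ∀ i, Measurable[m] (W i))
    (hDmeas : ∀ i, Measurable (D i)) (hFmeas : ∀ i, Measurable (F i))
    (hGmeas : ∀ i, Measurable (G i))
    (hW01 : ∀ i ω, W i ω = 0 ∨ W i ω = 1)
    (hD01 : ∀ i ω, D i ω = 0 ∨ D i ω = 1)
    (hF01 : ∀ i ω, F i ω = 0 ∨ F i ω = 1)
    (hG01 : ∀ i ω, G i ω = 0 ∨ G i ω = 1)
    (π : Fin n → Ω → ℝ)
    (hπ : ∀ i, π i =ᵐ[μ] μ[D i | m])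
    (hπpos : ∀ i, ∀ᵐ ω ∂μ, 0 < π i ω)
    (hF : ∀ i, μ[fun ω => D i ω * F i ω | m] =ᵐ[μ] fun ω => η * π i ω)
    (hG : ∀ i, μ[fun ω => D i ω * G i ω | m] =ᵐ[μ] fun ω => ν * π i ω)
    (Y : Fin n → Ω → ℝ)
    (hY : ∀ i ω, Y i ω = D i ω * (F i ω * (1 - W i ω) + (1 - G i ω) * W i ω)) :
    μ[fun ω => (η + ν - 1)⁻¹ * ∑ i, (π i ω)⁻¹ * D i ω * (1 - Y i ω)
        - (1 - η) * (η + ν - 1)⁻¹ * ∑ i, (π i ω)⁻¹ * D i ω | m]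
      =ᵐ[μ] fun ω => ∑ i, W i ω := by
  have hc0 : η + ν - 1 ≠ 0 := by linarith
  set c : ℝ := (η + ν - 1)⁻¹ with hcdef
  have hDm : ∀ i, Measurable[mΩ] (D i) := fun i => (hDmeas i)
  have hFm : ∀ i, Measurable[mΩ] (F i) := fun i => (hFmeas i)
  have hGm : ∀ i, Measurable[mΩ] (G i) := fun i => (hGmeas i)
  have hWm : ∀ i, Measurable[mΩ] (W i) := fun i => (hWmeas i).mono hm le_rfl
  have hpmeas : ∀ i, Measurable[mΩ] (μ[D i|m]) := fun i =>
    ((stronglyMeasurable_condExp (f := D i) (m := m) (μ := μ)).mono hm).measurable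
  have hDnn : ∀ i ω, 0 ≤ D i ω := fun i ω => by rcases hD01 i ω with h | h <;> simp [h]
  have hDle : ∀ i ω, D i ω ≤ 1 := fun i ω => by rcases hD01 i ω with h | h <;> simp [h]
  have hppos : ∀ i, ∀ᵐ ω ∂μ, 0 < (μ[D i|m]) ω := fun i => by
    filter_upwards [hπpos i, hπ i] with ω h1 h2
    rw [← h2]; exact h1
  have hAint : ∀ i, Integrable (fun ω => ((μ[D i|m]) ω)⁻¹ * D i ω) μ :=
    fun i => aux_integrable μ m hm (D i) (hDm i) (hD01 i)
  -- dominated integrability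
  have hdom : ∀ i (X : Ω → ℝ), Measurable[mΩ] X → (∀ ω, |X ω| ≤ D i ω) →
      Integrable (fun ω => ((μ[D i|m]) ω)⁻¹ * X ω) μ := by
    intro i X hXm hXD
    refine (hAint i).mono ((hpmeas i).inv.mul hXm).aestronglyMeasurable ?_
    filter_upwards with ω
    rw [Real.norm_eq_abs, Real.norm_eq_abs, abs_mul, abs_mul]
    exact mul_le_mul_of_nonneg_left ((hXD ω).trans (le_abs_self _)) (abs_nonneg _)
  -- conditional expectation of (μ[D i|m])⁻¹ * X for dominated X
  have hce : ∀ i (X : Ω → ℝ) (κ : ℝ), Measurable[mΩ] X → (∀ ω, |X ω| ≤ D i ω) →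
      (μ[X|m] =ᵐ[μ] fun ω => κ * (μ[D i|m]) ω) →
      μ[fun ω => ((μ[D i|m]) ω)⁻¹ * X ω|m] =ᵐ[μ] fun _ => κ := by
    intro i X κ hXm hXD hXce
    have hXint : Integrable X μ := by
      refine (integrable_const (1 : ℝ)).mono hXm.aestronglyMeasurable ?_
      filter_upwards with ω
      rw [Real.norm_eq_abs]
      simpa using (hXD ω).trans (hDle i ω)
    have h1 : μ[fun ω => ((μ[D i|m]) ω)⁻¹ * X ω|m]
        =ᵐ[μ] fun ω => ((μ[D i|m]) ω)⁻¹ * (μ[X|m]) ω :=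
      condExp_mul_of_stronglyMeasurable_left
        ((stronglyMeasurable_condExp (f := D i) (m := m) (μ := μ)).measurable.inv.stronglyMeasurable)
        (hdom i X hXm hXD) hXint
    refine h1.trans ?_
    filter_upwards [hXce, hppos i] with ω h2 h3
    rw [h2]
    field_simp
  have habsDF : ∀ i ω, |D i ω * F i ω| ≤ D i ω := by
    intro i ω
    rcases hD01 i ω with h | h <;> rcases hF01 i ω with h' | h' <;> simp [h, h']
  have habsDG : ∀ i ω, |D i ω * G i ω| ≤ D i ω := by
    intro i ω
    rcases hD01 i ω with h | h <;> rcases hG01 i ω with h' | h' <;> simp [h, h']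
  have habsD : ∀ i ω, |D i ω| ≤ D i ω := fun i ω => le_of_eq (abs_of_nonneg (hDnn i ω))
  have hA : ∀ i, μ[fun ω => ((μ[D i|m]) ω)⁻¹ * D i ω|m] =ᵐ[μ] fun _ => (1 : ℝ) :=
    fun i => hce i (D i) 1 (hDm i) (habsD i)
      (Filter.Eventually.of_forall fun ω => (one_mul _).symm)
  have hB : ∀ i, μ[fun ω => ((μ[D i|m]) ω)⁻¹ * (D i ω * F i ω)|m] =ᵐ[μ] fun _ => η := by
    intro i
    refine hce i (fun ω => D i ω * F i ω) η ((hDm i).mul (hFm i)) (habsDF i) ?_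
    filter_upwards [hF i, hπ i] with ω h1 h2
    rw [h1, h2]
  have hC : ∀ i, μ[fun ω => ((μ[D i|m]) ω)⁻¹ * (D i ω * G i ω)|m] =ᵐ[μ] fun _ => ν := by
    intro i
    refine hce i (fun ω => D i ω * G i ω) ν ((hDm i).mul (hGm i)) (habsDG i) ?_
    filter_upwards [hG i, hπ i] with ω h1 h2
    rw [h1, h2]
  have hBint : ∀ i, Integrable (fun ω => ((μ[D i|m]) ω)⁻¹ * (D i ω * F i ω)) μ :=
    fun i => hdom i _ ((hDm i).mul (hFm i)) (habsDF i)
  have hCint : ∀ i, Integrable (fun ω => ((μ[D i|m]) ω)⁻¹ * (D i ω * G i ω)) μ :=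
    fun i => hdom i _ ((hDm i).mul (hGm i)) (habsDG i)
  -- the function Z i
  set Z : Fin n → Ω → ℝ := fun i ω => c * (((μ[D i|m]) ω)⁻¹ * (D i ω * F i ω)
      - ((μ[D i|m]) ω)⁻¹ * D i ω + ((μ[D i|m]) ω)⁻¹ * (D i ω * G i ω)) with hZdef
  have hZint : ∀ i, Integrable (Z i) μ :=
    fun i => (((hBint i).sub (hAint i)).add (hCint i)).const_mul c
  have hZce : ∀ i, μ[Z i|m] =ᵐ[μ] fun _ => (1 : ℝ) := by
    intro i
    have hsub : μ[fun ω => ((μ[D i|m]) ω)⁻¹ * (D i ω * F i ω)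
          - ((μ[D i|m]) ω)⁻¹ * D i ω|m]
        =ᵐ[μ] fun ω => (μ[fun ω => ((μ[D i|m]) ω)⁻¹ * (D i ω * F i ω)|m]) ω
          - (μ[fun ω => ((μ[D i|m]) ω)⁻¹ * D i ω|m]) ω :=
      condExp_sub (hBint i) (hAint i) m
    have hadd : μ[fun ω => ((μ[D i|m]) ω)⁻¹ * (D i ω * F i ω)
          - ((μ[D i|m]) ω)⁻¹ * D i ω + ((μ[D i|m]) ω)⁻¹ * (D i ω * G i ω)|m]
        =ᵐ[μ] fun ω => (μ[fun ω => ((μ[D i|m]) ω)⁻¹ * (D i ω * F i ω)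
            - ((μ[D i|m]) ω)⁻¹ * D i ω|m]) ω
          + (μ[fun ω => ((μ[D i|m]) ω)⁻¹ * (D i ω * G i ω)|m]) ω :=
      condExp_add ((hBint i).sub (hAint i)) (hCint i) m
    have h1 : μ[fun ω => ((μ[D i|m]) ω)⁻¹ * (D i ω * F i ω)
          - ((μ[D i|m]) ω)⁻¹ * D i ω + ((μ[D i|m]) ω)⁻¹ * (D i ω * G i ω)|m]
        =ᵐ[μ] fun _ => η - 1 + ν := by
      refine hadd.trans ?_
      filter_upwards [hsub, hA i, hB i, hC i] with ω h2 h3 h4 h5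
      simp only [h2, h3, h4, h5]
    have hsmul : μ[Z i|m] =ᵐ[μ] fun ω =>
        c * (μ[fun ω => ((μ[D i|m]) ω)⁻¹ * (D i ω * F i ω)
          - ((μ[D i|m]) ω)⁻¹ * D i ω + ((μ[D i|m]) ω)⁻¹ * (D i ω * G i ω)|m]) ω :=
      condExp_smul (𝕜 := ℝ) c _ m
    refine hsmul.trans ?_
    filter_upwards [h1] with ω h2
    simp only [h2]
    rw [hcdef, show η - 1 + ν = η + ν - 1 by ring]
    exact inv_mul_cancel₀ hc0
  have hWZint : ∀ i, Integrable (fun ω => W i ω * Z i ω) μ := fun i =>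
    (hZint i).bdd_mul (hWm i).aestronglyMeasurable
      (c := 1) (Filter.Eventually.of_forall fun ω => by rcases hW01 i ω with h | h <;> simp [h])
  have hWZ : ∀ i, μ[fun ω => W i ω * Z i ω|m] =ᵐ[μ] W i := by
    intro i
    have h1 : μ[fun ω => W i ω * Z i ω|m]
        =ᵐ[μ] fun ω => W i ω * (μ[Z i|m]) ω :=
      condExp_mul_of_stronglyMeasurable_left (hWmeas i).stronglyMeasurable
        (hWZint i) (hZint i)
    refine h1.trans ?_
    filter_upwards [hZce i] with ω h2
    simp only [h2, mul_one]
  -- the summand T i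
  set T : Fin n → Ω → ℝ := fun i ω =>
    c * η * (((μ[D i|m]) ω)⁻¹ * D i ω) - c * (((μ[D i|m]) ω)⁻¹ * (D i ω * F i ω))
      + W i ω * Z i ω with hTdef
  have hTint : ∀ i, Integrable (T i) μ := fun i =>
    (((hAint i).const_mul (c * η)).sub ((hBint i).const_mul c)).add (hWZint i)
  have hT : ∀ i, μ[T i|m] =ᵐ[μ] W i := by
    intro i
    have eadd : μ[T i|m] =ᵐ[μ] fun ω =>
        (μ[fun ω => c * η * (((μ[D i|m]) ω)⁻¹ * D i ω)
          - c * (((μ[D i|m]) ω)⁻¹ * (D i ω * F i ω))|m]) ω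
        + (μ[fun ω => W i ω * Z i ω|m]) ω :=
      condExp_add (((hAint i).const_mul (c * η)).sub ((hBint i).const_mul c)) (hWZint i) m
    have esub : μ[fun ω => c * η * (((μ[D i|m]) ω)⁻¹ * D i ω)
          - c * (((μ[D i|m]) ω)⁻¹ * (D i ω * F i ω))|m]
        =ᵐ[μ] fun ω => (μ[fun ω => c * η * (((μ[D i|m]) ω)⁻¹ * D i ω)|m]) ω
          - (μ[fun ω => c * (((μ[D i|m]) ω)⁻¹ * (D i ω * F i ω))|m]) ω :=
      condExp_sub ((hAint i).const_mul (c * η)) ((hBint i).const_mul c) m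
    have e1 : μ[fun ω => c * η * (((μ[D i|m]) ω)⁻¹ * D i ω)|m]
        =ᵐ[μ] fun ω => c * η * (μ[fun ω => ((μ[D i|m]) ω)⁻¹ * D i ω|m]) ω :=
      condExp_smul (𝕜 := ℝ) (c * η) _ m
    have e2 : μ[fun ω => c * (((μ[D i|m]) ω)⁻¹ * (D i ω * F i ω))|m]
        =ᵐ[μ] fun ω => c * (μ[fun ω => ((μ[D i|m]) ω)⁻¹ * (D i ω * F i ω)|m]) ω :=
      condExp_smul (𝕜 := ℝ) c _ m
    refine eadd.trans ?_
    filter_upwards [esub, e1, e2, hA i, hB i, hWZ i] with ω h1 h2 h3 h4 h5 h6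
    simp only [h1, h2, h3, h4, h5, h6]
    ring
  have key : μ[∑ i, T i|m] =ᵐ[μ] fun ω => ∑ i, W i ω := by
    refine (condExp_finset_sum (fun i _ => hTint i) m).trans ?_
    filter_upwards [ae_all_iff.2 hT] with ω hω
    rw [Finset.sum_apply]
    exact Finset.sum_congr rfl fun i _ => hω i
  refine (condExp_congr_ae ?_).trans key
  filter_upwards [ae_all_iff.2 hπ] with ω hω
  rw [Finset.sum_apply, Finset.mul_sum, Finset.mul_sum, ← Finset.sum_sub_distrib]
  refine Finset.sum_congr rfl fun i _ => ?_
  simp only [hTdef, hZdef]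
  rw [hω i, hY i ω]
  rcases hD01 i ω with h | h <;> rw [h] <;> ring
end

section
/- Let A, D, I be events on a probability space with 0 < P(A) < 1. Suppose D and I are conditionally independent given A and conditionally independent given the complement Aᶜ (i.e., P(I ∩ D | A) = P(I | A)·P(D | A) and P(I ∩ D | Aᶜ) = P(I | Aᶜ)·P(D | Aᶜ)), that P(D | A) = 1 and P(D | Aᶜ) < 1, and that P(I | A) > P(I | Aᶜ). Then P(I | D) > P(I); in particular, D and I are not independent. -/
/-!
Write `p = P(A)`, `q = P(Aᶜ)`, `a = P(I | A)`, `c = P(I | Aᶜ)` and `d = P(D | Aᶜ)`.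
By the law of total probability and the two conditional independences,
`P(I) = a p + c q`, `P(D) = p + d q` and `P(I ∩ D) = a p + c d q`, and with `p + q = 1`
a direct computation gives `P(I ∩ D) - P(I) P(D) = p q (1 - d) (a - c) > 0`.
Since `P(I ∩ D) = P(I | D) P(D)`, this yields `P(I | D) > P(I)`.
-/

open MeasureTheory ProbabilityTheory

theorem mixture_mul_lt_mixture_inter {p q a c d : ℝ} (hp : 0 < p) (hq : 0 < q)
    (hpq : p + q = 1) (hd : d < 1) (hca : c < a) :
    (a * p + c * q) * (p + d * q) < a * p + c * d * q := by
  have key : a * p + c * d * q - (a * p + c * q) * (p + d * q)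
      = p * q * (1 - d) * (a - c) := by
    obtain rfl : q = 1 - p := by linarith
    ring
  have : 0 < p * q * (1 - d) * (a - c) := by
    have : 0 < 1 - d := by linarith
    have : 0 < a - c := by linarith
    positivity
  linarith

section

variable {Ω : Type*} [MeasurableSpace Ω] {μ : Measure Ω} {A D I : Set Ω}

theorem mul_lt_measure_inter_of_condIndep [IsProbabilityMeasure μ] (hA : MeasurableSet A)
    (hApos : 0 < μ A) (hAlt : μ A < 1)
    (hciA : μ[|A] (I ∩ D) = μ[|A] I * μ[|A] D)
    (hciAc : μ[|Aᶜ] (I ∩ D) = μ[|Aᶜ] I * μ[|Aᶜ] D)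
    (hDA : μ[|A] D = 1) (hDAc : μ[|Aᶜ] D < 1) (hIA : μ[|Aᶜ] I < μ[|A] I) :
    μ I * μ D < μ (I ∩ D) := by
  have hAcpos : 0 < μ Aᶜ := by
    rw [prob_compl_eq_one_sub hA]
    exact tsub_pos_of_lt hAlt
  rw [← cond_add_cond_compl_eq hA μ (t := I), ← cond_add_cond_compl_eq hA μ (t := D),
    ← cond_add_cond_compl_eq hA μ (t := I ∩ D), hciA, hciAc, hDA,
    ← ENNReal.toReal_lt_toReal (by finiteness) (by finiteness)]
  simp (disch := finiteness) only [ENNReal.toReal_mul, ENNReal.toReal_add, mul_one,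
    one_mul]
  refine mixture_mul_lt_mixture_inter (ENNReal.toReal_pos hApos.ne' (by finiteness))
    (ENNReal.toReal_pos hAcpos.ne' (by finiteness)) ?_ ?_ ?_
  · rw [← ENNReal.toReal_add (by finiteness) (by finiteness), measure_add_measure_compl hA,
      measure_univ, ENNReal.toReal_one]
  · simpa using (ENNReal.toReal_lt_toReal (by finiteness) (by finiteness)).2 hDAc
  · exact (ENNReal.toReal_lt_toReal (by finiteness) (by finiteness)).2 hIA

theorem lt_cond_of_mul_lt_measure_inter [IsFiniteMeasure μ] (hD : MeasurableSet D)
    (h : μ I * μ D < μ (I ∩ D)) :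
    μ I < μ[|D] I := by
  rw [Set.inter_comm, ← cond_mul_eq_inter hD] at h
  exact lt_of_mul_lt_mul_right' h

end

theorem stmt8_general
    {Ω : Type*} [MeasurableSpace Ω] (μ : Measure Ω) [IsProbabilityMeasure μ]
    (A D I : Set Ω)
    (hA : MeasurableSet A) (hD : MeasurableSet D)
    (hApos : 0 < μ A) (hAlt : μ A < 1)
    (hciA : μ[|A] (I ∩ D) = μ[|A] I * μ[|A] D)
    (hciAc : μ[|Aᶜ] (I ∩ D) = μ[|Aᶜ] I * μ[|Aᶜ] D)
    (hDA : μ[|A] D = 1)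
    (hDAc : μ[|Aᶜ] D < 1)
    (hIA : μ[|Aᶜ] I < μ[|A] I) :
    μ I < μ[|D] I ∧ μ (I ∩ D) ≠ μ I * μ D := by
  have hcorr := mul_lt_measure_inter_of_condIndep hA hApos hAlt hciA hciAc hDA hDAc hIA
  exact ⟨lt_cond_of_mul_lt_measure_inter hD hcorr, hcorr.ne'⟩

/-- Example 2, max-gap testing violates MITI: if testing and infectiousness
are conditionally independent given `A` and given `Aᶜ`, everyone in `A` is tested,
testing on `Aᶜ` is not certain, and infection is more likely on `A`, then
`P(I | D) > P(I)`; in particular `D` and `I` are not independent. -/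
theorem stmt8
    {Ω : Type*} [MeasurableSpace Ω] (μ : Measure Ω) [IsProbabilityMeasure μ]
    (A D I : Set Ω)
    (hA : MeasurableSet A) (hD : MeasurableSet D) (hI : MeasurableSet I)
    (hApos : 0 < μ A) (hAlt : μ A < 1)
    (hciA : μ[|A] (I ∩ D) = μ[|A] I * μ[|A] D)
    (hciAc : μ[|Aᶜ] (I ∩ D) = μ[|Aᶜ] I * μ[|Aᶜ] D)
    (hDA : μ[|A] D = 1)
    (hDAc : μ[|Aᶜ] D < 1)
    (hIA : μ[|Aᶜ] I < μ[|A] I) :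
    μ I < μ[|D] I ∧ μ (I ∩ D) ≠ μ I * μ D :=
  stmt8_general μ A D I hA hD hApos hAlt hciA hciAc hDA hDAc hIA
end

section
/- Let A, D, I be events on a probability space with D ⊆ A, P(D) > 0, and P(A) < 1. Suppose D and I are conditionally independent given A (i.e., P(I ∩ D | A) = P(I | A)·P(D | A)), and that P(I | A) > P(I | Aᶜ). Then P(I | D) = P(I | A) > P(I); in particular, D and I are not independent. -/
open MeasureTheory ProbabilityTheory

/-! Conditioning on `D ⊆ A` is conditioning `μ[|A]` on `D`, and under `μ[|A]` the events `D` and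
`I` are independent, so `P(I | D) = P(I | A)`. By the law of total probability `P(I)` is a
weighted average of `P(I | A)` and `P(I | Aᶜ)` in which `Aᶜ` has positive weight, hence
`P(I) < P(I | A)`. Independence of `D` and `I` would force `P(I | D) = P(I)`. -/

namespace ProbabilityTheory

variable {Ω : Type*} [MeasurableSpace Ω] {μ : Measure Ω} {A D I : Set Ω}

lemma cond_apply_eq_of_measure_inter_eq_mul [IsFiniteMeasure μ] (hD : MeasurableSet D)
    (hD₀ : μ D ≠ 0) (h : μ (I ∩ D) = μ I * μ D) : μ[I | D] = μ I := by
  rw [cond_apply hD, Set.inter_comm, h, mul_comm (μ I), ← mul_assoc,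
    ENNReal.inv_mul_cancel hD₀ (measure_ne_top μ D), one_mul]

lemma measure_lt_cond_of_cond_compl_lt [IsProbabilityMeasure μ] (hA : MeasurableSet A)
    (hA₁ : μ A < 1) (h : μ[I | Aᶜ] < μ[I | A]) : μ I < μ[I | A] := by
  have hAc : μ Aᶜ ≠ 0 := by
    rw [prob_compl_eq_one_sub hA]
    exact (tsub_pos_iff_lt.mpr hA₁).ne'
  calc μ I = μ[I | A] * μ A + μ[I | Aᶜ] * μ Aᶜ := (cond_add_cond_compl_eq hA μ).symm
    _ < μ[I | A] * μ A + μ[I | A] * μ Aᶜ :=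
      ENNReal.add_lt_add_left (by finiteness)
        (ENNReal.mul_lt_mul_left hAc (measure_ne_top μ _) h)
    _ = μ[I | A] := by rw [← mul_add, measure_add_measure_compl hA, measure_univ, mul_one]

end ProbabilityTheory

theorem stmt9_general
    {Ω : Type*} [MeasurableSpace Ω] (μ : Measure Ω) [IsProbabilityMeasure μ]
    (A D I : Set Ω)
    (hA : MeasurableSet A) (hD : MeasurableSet D)
    (hDA : D ⊆ A)
    (hDpos : 0 < μ D) (hAlt : μ A < 1)
    (hciA : μ[|A] (I ∩ D) = μ[|A] I * μ[|A] D)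
    (hIA : μ[|Aᶜ] I < μ[|A] I) :
    μ[|D] I = μ[|A] I ∧ μ I < μ[|D] I ∧ μ (I ∩ D) ≠ μ I * μ D := by
  have hAD : A ∩ D = D := Set.inter_eq_right.mpr hDA
  have hD_condA : μ[D | A] ≠ 0 :=
    (cond_pos_of_inter_ne_zero hA (by rw [hAD]; exact hDpos.ne')).ne'
  have hcond : μ[|D] I = μ[|A] I := by
    rw [← hAD, ← cond_cond_eq_cond_inter hA hD]
    exact cond_apply_eq_of_measure_inter_eq_mul hD hD_condA hciA
  have hlt : μ I < μ[|D] I := hcond ▸ measure_lt_cond_of_cond_compl_lt hA hAlt hIA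
  exact ⟨hcond, hlt, fun hindep =>
    hlt.ne (cond_apply_eq_of_measure_inter_eq_mul hD hDpos.ne' hindep).symm⟩

/-- Example 3, once-per-period testing violates MITI: if only individuals
in `A` are eligible for testing (`D ⊆ A`), testing and infectiousness are conditionally
independent given `A`, and infection is more likely on `A` than on `Aᶜ`, then
`P(I | D) = P(I | A) > P(I)`; in particular `D` and `I` are not independent. -/
theorem stmt9
    {Ω : Type*} [MeasurableSpace Ω] (μ : Measure Ω) [IsProbabilityMeasure μ]
    (A D I : Set Ω)
    (hA : MeasurableSet A) (hD : MeasurableSet D) (hI : MeasurableSet I)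
    (hDA : D ⊆ A)
    (hDpos : 0 < μ D) (hAlt : μ A < 1)
    (hciA : μ[|A] (I ∩ D) = μ[|A] I * μ[|A] D)
    (hIA : μ[|Aᶜ] I < μ[|A] I) :
    μ[|D] I = μ[|A] I ∧ μ I < μ[|D] I ∧ μ (I ∩ D) ≠ μ I * μ D :=
  stmt9_general μ A D I hA hD hDA hDpos hAlt hciA hIA
end

section
/- Let I, D, R be events on a probability space and let Z be a random variable taking values in a finite set S. Assume P(D ∩ Rᶜ) > 0 and that for every z ∈ S with P({Z = z} ∩ Rᶜ) > 0 one has P(I ∩ D | {Z = z} ∩ Rᶜ) = P(I | {Z = z} ∩ Rᶜ)·P(D | {Z = z} ∩ Rᶜ) (conditional independence of testing and infectiousness within strata, CITI). Then P(I | D ∩ Rᶜ) = Σ_z P(I | {Z = z} ∩ Rᶜ)·P(Z = z | D ∩ Rᶜ), where the sum is over those z ∈ S with P({Z = z} ∩ D ∩ Rᶜ) > 0. -/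
open MeasureTheory ProbabilityTheory

open scoped Classical in
/-- under CITI (conditional independence of testing and infectiousness
within strata of the last test time `Z` among non-removed individuals), the expected
test-positive rate decomposes as the weighted average of stratum-specific prevalences
with weights given by the distribution of `Z` among tested non-removed individuals. -/
theorem stmt10
    {Ω : Type*} [MeasurableSpace Ω] (μ : Measure Ω) [IsProbabilityMeasure μ]
    (I D R : Set Ω)
    (hI : MeasurableSet I) (hD : MeasurableSet D) (hR : MeasurableSet R)
    (Z : Ω → ℕ) (hZ : Measurable Z)
    (S : Finset ℕ) (hZS : ∀ ω, Z ω ∈ S)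
    (hDRpos : 0 < μ (D ∩ Rᶜ))
    (hCITI : ∀ z ∈ S, 0 < μ ({ω | Z ω = z} ∩ Rᶜ) →
      μ[|{ω | Z ω = z} ∩ Rᶜ] (I ∩ D)
        = μ[|{ω | Z ω = z} ∩ Rᶜ] I * μ[|{ω | Z ω = z} ∩ Rᶜ] D) :
    (μ[|D ∩ Rᶜ] I).toReal
      = ∑ z ∈ S.filter (fun z => 0 < μ ({ω | Z ω = z} ∩ D ∩ Rᶜ)),
          (μ[|{ω | Z ω = z} ∩ Rᶜ] I).toReal * (μ[|D ∩ Rᶜ] {ω | Z ω = z}).toReal := by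
  classical
  have hAm : ∀ z : ℕ, MeasurableSet ({ω | Z ω = z} ∩ Rᶜ) :=
    fun z => (hZ (measurableSet_singleton z)).inter hR.compl
  have hDR : MeasurableSet (D ∩ Rᶜ) := hD.inter hR.compl
  have ha : (0:ℝ) < (μ (D ∩ Rᶜ)).toReal :=
    ENNReal.toReal_pos hDRpos.ne' (measure_ne_top μ _)
  have hcond : ∀ (s t : Set Ω), MeasurableSet s →
      (μ[|s] t).toReal = (μ (s ∩ t)).toReal / (μ s).toReal := by
    intro s t hs
    rw [ProbabilityTheory.cond_apply hs, ENNReal.toReal_mul, ENNReal.toReal_inv]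
    ring
  set F := S.filter (fun z => 0 < μ ({ω | Z ω = z} ∩ D ∩ Rᶜ)) with hF
  -- per-z key identity
  have key : ∀ z ∈ F,
      (μ[|{ω | Z ω = z} ∩ Rᶜ] I).toReal * (μ[|D ∩ Rᶜ] {ω | Z ω = z}).toReal
        = (μ (({ω | Z ω = z} ∩ Rᶜ) ∩ (I ∩ D))).toReal / (μ (D ∩ Rᶜ)).toReal := by
    intro z hz
    simp only [hF, Finset.mem_filter] at hz
    obtain ⟨hzS, hzpos⟩ := hz
    have hsub : {ω | Z ω = z} ∩ D ∩ Rᶜ ⊆ {ω | Z ω = z} ∩ Rᶜ := by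
      intro ω hω; exact ⟨hω.1.1, hω.2⟩
    have hApos : 0 < μ ({ω | Z ω = z} ∩ Rᶜ) := lt_of_lt_of_le hzpos (measure_mono hsub)
    have hp : (0:ℝ) < (μ ({ω | Z ω = z} ∩ Rᶜ)).toReal :=
      ENNReal.toReal_pos hApos.ne' (measure_ne_top μ _)
    have hC := hCITI z hzS hApos
    have hC' : (μ (({ω | Z ω = z} ∩ Rᶜ) ∩ (I ∩ D))).toReal
          / (μ ({ω | Z ω = z} ∩ Rᶜ)).toReal
        = ((μ (({ω | Z ω = z} ∩ Rᶜ) ∩ I)).toReal / (μ ({ω | Z ω = z} ∩ Rᶜ)).toReal)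
          * ((μ (({ω | Z ω = z} ∩ Rᶜ) ∩ D)).toReal / (μ ({ω | Z ω = z} ∩ Rᶜ)).toReal) := by
      rw [← hcond _ _ (hAm z), ← hcond _ _ (hAm z), ← hcond _ _ (hAm z), hC,
        ENNReal.toReal_mul]
    have hset : (D ∩ Rᶜ) ∩ {ω | Z ω = z} = ({ω | Z ω = z} ∩ Rᶜ) ∩ D := by
      ext ω; constructor
      · rintro ⟨⟨h1, h2⟩, h3⟩; exact ⟨⟨h3, h2⟩, h1⟩
      · rintro ⟨⟨h1, h2⟩, h3⟩; exact ⟨⟨h3, h2⟩, h1⟩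
    rw [hcond _ _ (hAm z), hcond _ _ hDR, hset]
    field_simp at hC' ⊢
    nlinarith [hC', hp, ha]
  rw [Finset.sum_congr rfl key, ← Finset.sum_div, hcond _ _ hDR]
  congr 1
  -- sum over F equals sum over S
  have hzero : ∀ z ∈ S, z ∉ F → (μ (({ω | Z ω = z} ∩ Rᶜ) ∩ (I ∩ D))).toReal = 0 := by
    intro z hzS hzF
    simp only [hF, Finset.mem_filter, not_and, not_lt, nonpos_iff_eq_zero] at hzF
    have h0 := hzF hzS
    have hsub : ({ω | Z ω = z} ∩ Rᶜ) ∩ (I ∩ D) ⊆ {ω | Z ω = z} ∩ D ∩ Rᶜ := by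
      intro ω hω; exact ⟨⟨hω.1.1, hω.2.2⟩, hω.1.2⟩
    have := measure_mono_null hsub h0
    simp [this]
  have hsum : ∑ z ∈ F, (μ (({ω | Z ω = z} ∩ Rᶜ) ∩ (I ∩ D))).toReal
      = ∑ z ∈ S, (μ (({ω | Z ω = z} ∩ Rᶜ) ∩ (I ∩ D))).toReal :=
    Finset.sum_subset (Finset.filter_subset _ _) hzero
  rw [hsum]
  -- disjoint union
  have hdisj : (↑S : Set ℕ).PairwiseDisjoint
      (fun z => ({ω | Z ω = z} ∩ Rᶜ) ∩ (I ∩ D)) := by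
    intro x _ y _ hxy
    refine Set.disjoint_left.mpr ?_
    rintro ω ⟨⟨hx, _⟩, _⟩ ⟨⟨hy, _⟩, _⟩
    exact hxy (hx ▸ hy.symm ▸ rfl)
  have hmeas : ∀ z ∈ S, MeasurableSet (({ω | Z ω = z} ∩ Rᶜ) ∩ (I ∩ D)) :=
    fun z _ => (hAm z).inter (hI.inter hD)
  have hU : (D ∩ Rᶜ) ∩ I = ⋃ z ∈ S, ({ω | Z ω = z} ∩ Rᶜ) ∩ (I ∩ D) := by
    ext ω
    simp only [Set.mem_iUnion, Set.mem_inter_iff, Set.mem_compl_iff, Set.mem_setOf_eq]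
    constructor
    · rintro ⟨⟨hd, hr⟩, hi⟩; exact ⟨Z ω, hZS ω, ⟨rfl, hr⟩, hi, hd⟩
    · rintro ⟨z, _, ⟨_, hr⟩, hi, hd⟩; exact ⟨⟨hd, hr⟩, hi⟩
  rw [hU, measure_biUnion_finset hdisj hmeas, ENNReal.toReal_sum
    (fun z _ => measure_ne_top μ _)]
end
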